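/- arXiv:1304.0237 — 4 statements merged into one kernel-verified Lean document; each statement's English description precedes it below -/
import Mathlib

section
/- Let r be a bihomogeneous polynomial of bidegree (m,m) on ℂ^n with signature pair (P,N) and rank R = P+N = C(m+n-1, m) (full rank). If r(z,z̄)·‖z‖^{2d} is a squared norm, then P ≥ C(m+d+n-1, m+d) / C(d+n-1, d). -/
/-!
Writing `‖z‖^{2d} = ∑_t |z^t|²` over sequences `t : Fin d → Fin n`, the hypothesis becomes the
identity `∑ |f_j z^t|² = ∑ |g_j z^t|² + ∑ |h_k|²` of squared norms of holomorphic polynomials.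
Polarizing (treating `z̄` as an independent variable) turns it into an identity of Hermitian
coefficient forms, so a linear functional `φ` vanishing on all `f_j z^t` satisfies
`∑ |φ(g_j z^t)|² + ∑ |φ(h_k)|² = 0`; hence `g_j z^t ∈ span (f_j z^t)`. By full rank the `f_j, g_j`
span the homogeneous polynomials `H_m` of degree `m`, so `H_{m+d} = H_m · H_d ⊆ span(f) · H_d`,
a space of dimension at most `P · dim H_d`, where `dim H_k = C(k+n-1, k)`.
-/

open MvPolynomial Module Set Submodule ComplexConjugate

section

variable {K A : Type*} [Field K] [CommRing A] [Algebra K A]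

theorem Submodule.finrank_le_of_le_span_range_mul {ι : Type*} [Fintype ι] {a : ι → A}
    {M N : Submodule K A} [FiniteDimensional K N] (hM : M ≤ span K (range a) * N) :
    finrank K M ≤ Fintype.card ι * finrank K N := by
  let Φ : (ι → N) →ₗ[K] A := ∑ i, LinearMap.mulLeft K (a i) ∘ₗ N.subtype ∘ₗ LinearMap.proj i
  have hΦ : M ≤ LinearMap.range Φ := by
    refine hM.trans (Submodule.mul_le.2 fun x hx y hy => ?_)
    obtain ⟨c, rfl⟩ := (mem_span_range_iff_exists_fun K).1 hx
    refine ⟨fun i => c i • ⟨y, hy⟩, ?_⟩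
    simp [Φ, Finset.sum_mul]
  calc finrank K M ≤ finrank K (LinearMap.range Φ) := Submodule.finrank_mono hΦ
    _ ≤ finrank K (ι → N) := LinearMap.finrank_range_le Φ
    _ = Fintype.card ι * finrank K N := by
      rw [finrank_pi_fintype, Finset.sum_const, Finset.card_univ, smul_eq_mul]

theorem LinearIndependent.span_eq_of_card_eq_finrank {V ι : Type*} [AddCommGroup V] [Module K V]
    [Fintype ι] {v : ι → V} (hv : LinearIndependent K v) {M : Submodule K V}
    [FiniteDimensional K M] (hvM : ∀ i, v i ∈ M) (hcard : Fintype.card ι = finrank K M) :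
    span K (range v) = M :=
  eq_of_le_of_finrank_eq (span_le.2 (range_subset_iff.2 hvM))
    (by rw [finrank_span_eq_card hv, hcard])

theorem Submodule.span_range_mul_span_range {ι κ : Type*} (a : ι → A) (b : κ → A) :
    span K (range a) * span K (range b) = span K (range fun x : ι × κ => a x.1 * b x.2) := by
  rw [span_mul_span]
  congr 1
  ext p
  simp [Set.mem_mul]

end

namespace MvPolynomial

variable {σ : Type*}

theorem finrank_homogeneousSubmodule [Fintype σ] (K : Type*) [Field K] (k : ℕ) :
    finrank K (homogeneousSubmodule σ K k) = (k + Fintype.card σ - 1).choose k := by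
  classical
  have hdeg : {d : σ →₀ ℕ | d.degree = k} = ↑((Finset.univ : Finset σ).finsuppAntidiag k) := by
    ext d
    simp [Finset.mem_finsuppAntidiag, Finsupp.degree_eq_sum]
  rw [homogeneousSubmodule_eq_finsupp_supported, hdeg,
    (AddMonoidAlgebra.supportedEquivFinsupp _).finrank_eq, finrank_finsupp_self]
  simp [Finset.card_finsuppAntidiag_nat_eq_choose, add_comm]

instance [Finite σ] (K : Type*) [Field K] (k : ℕ) :
    FiniteDimensional K (homogeneousSubmodule σ K k) :=
  Module.Finite.iff_fg.2 (homogeneousSubmodule_fg σ K k)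

theorem span_range_prod_X_eq_homogeneousSubmodule (R : Type*) [CommSemiring R] (k : ℕ) :
    span R (range fun t : Fin k → σ => ∏ s, (X (t s) : MvPolynomial σ R)) =
      homogeneousSubmodule σ R k := by
  rw [← homogeneousSubmodule_one_pow, homogeneousSubmodule_one_eq_span_X, span_pow]
  congr 1
  ext p
  simp only [mem_range, Set.mem_pow_iff_prod]
  constructor
  · rintro ⟨t, rfl⟩
    exact ⟨fun s => X (t s), fun s => mem_range_self _, rfl⟩
  · rintro ⟨q, hq, rfl⟩
    choose t ht using hq
    exact ⟨t, by simp only [ht]⟩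

theorem homogeneousSubmodule_add_eq_mul (R : Type*) [CommSemiring R] (m d : ℕ) :
    homogeneousSubmodule σ R (m + d) =
      homogeneousSubmodule σ R m * homogeneousSubmodule σ R d := by
  rw [← homogeneousSubmodule_one_pow, pow_add, homogeneousSubmodule_one_pow,
    homogeneousSubmodule_one_pow]

theorem eq_zero_of_eval_conj_eq_zero {Q : MvPolynomial (σ ⊕ σ) ℂ}
    (hQ : ∀ z : σ → ℂ, eval (Sum.elim (conj ∘ z) z) Q = 0) : Q = 0 := by
  -- `z = x + i y`: `Q ∘ s` vanishes at all real `(x, y)`, and `s` is invertible over `ℂ`.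
  let s : σ ⊕ σ → MvPolynomial (σ ⊕ σ) ℂ :=
    Sum.elim (fun k => X (.inl k) - C Complex.I * X (.inr k))
      (fun k => X (.inl k) + C Complex.I * X (.inr k))
  have heval : ∀ y : σ ⊕ σ → ℂ, eval y (bind₁ s Q) =
      eval (Sum.elim (fun k => y (.inl k) - Complex.I * y (.inr k))
        (fun k => y (.inl k) + Complex.I * y (.inr k))) Q := by
    intro y
    rw [eval, eval₂Hom_bind₁]
    congr 2
    ext (k | k) <;> simp [s]
  have hreal : bind₁ s Q = 0 := by
    refine funext_set (fun _ => range ((↑) : ℝ → ℂ))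
      (fun _ => infinite_range_of_injective Complex.ofReal_injective) fun y hy => ?_
    have hy_conj : ∀ i, conj (y i) = y i := fun i => by
      obtain ⟨x, hx⟩ := hy i (mem_univ i)
      rw [← hx, Complex.conj_ofReal]
    rw [heval, map_zero]
    convert hQ fun k => y (.inl k) + Complex.I * y (.inr k) using 3
    ext (k | k)
    · simp only [Sum.elim_inl, Function.comp_apply, map_add, map_mul, hy_conj, Complex.conj_I]
      ring
    · rfl
  refine MvPolynomial.funext fun w => ?_
  let y : σ ⊕ σ → ℂ := Sum.elim (fun k => (w (.inl k) + w (.inr k)) / 2)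
    (fun k => (w (.inr k) - w (.inl k)) / (2 * Complex.I))
  have hy : Sum.elim (fun k => y (.inl k) - Complex.I * y (.inr k))
      (fun k => y (.inl k) + Complex.I * y (.inr k)) = w := by
    ext (k | k) <;> simp only [Sum.elim_inl, Sum.elim_inr, y] <;> field_simp <;> ring
  rw [map_zero, ← hy, ← heval, hreal, map_zero]

/-- The polarization `p̄(w̄) p(z)` of `|p(z)|²`, with the left copy of the variables for `w̄`. -/
noncomputable def polarNormSq (p : MvPolynomial σ ℂ) : MvPolynomial (σ ⊕ σ) ℂ :=
  rename Sum.inl (map (starRingEnd ℂ) p) * rename Sum.inr p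

theorem eval_polarNormSq (z : σ → ℂ) (p : MvPolynomial σ ℂ) :
    eval (Sum.elim (conj ∘ z) z) (polarNormSq p) = (‖eval z p‖ ^ 2 : ℝ) := by
  rw [polarNormSq, map_mul, eval_rename, eval_rename, Sum.elim_comp_inl, Sum.elim_comp_inr,
    eval_map, Complex.ofReal_pow, ← Complex.conj_mul']
  congr 1
  simpa [Function.comp_def] using (map_eval₂Hom (RingHom.id ℂ) z (starRingEnd ℂ) p).symm

theorem coeff_sumAlgEquiv_polarNormSq (b : σ →₀ ℕ) (p : MvPolynomial σ ℂ) :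
    coeff b (sumAlgEquiv ℂ σ σ (polarNormSq p)) = conj (coeff b p) • p := by
  have hl := congr($(sumAlgEquiv_comp_rename_inl ℂ σ σ) (map (starRingEnd ℂ) p))
  have hr := congr($(sumAlgEquiv_comp_rename_inr ℂ σ σ) p)
  simp only [AlgHom.comp_apply, AlgEquiv.coe_toAlgHom] at hl hr
  rw [polarNormSq, map_mul, hl, hr]
  simp [coeff_map, smul_eq_C_mul, mul_comm]

theorem span_range_le_of_sum_norm_sq_eq {ι κ : Type*} [Fintype ι] [Fintype κ]
    (F : ι → MvPolynomial σ ℂ) (G : κ → MvPolynomial σ ℂ)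
    (h : ∀ z, ∑ i, ‖eval z (F i)‖ ^ 2 = ∑ j, ‖eval z (G j)‖ ^ 2) :
    span ℂ (range G) ≤ span ℂ (range F) := by
  have hpolar : ∑ i, polarNormSq (F i) = ∑ j, polarNormSq (G j) :=
    sub_eq_zero.1 <| eq_zero_of_eval_conj_eq_zero fun z => by
      simp only [map_sub, map_sum, eval_polarNormSq, ← Complex.ofReal_sum, h, sub_self]
  have hcoeff (b : σ →₀ ℕ) :
      ∑ i, conj (coeff b (F i)) • F i = ∑ j, conj (coeff b (G j)) • G j := by
    simpa [map_sum, coeff_sum, coeff_sumAlgEquiv_polarNormSq] using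
      congr(coeff b (sumAlgEquiv ℂ σ σ $hpolar))
  refine span_le.2 (range_subset_iff.2 fun j => ?_)
  by_contra hj
  obtain ⟨φ, hφj, hφF⟩ := exists_dual_map_eq_bot_of_notMem hj inferInstance
  have hφ_F (i : ι) : φ (F i) = 0 := by
    have := mem_map_of_mem (f := φ) (subset_span (mem_range_self i) : F i ∈ span ℂ (range F))
    rwa [hφF, mem_bot] at this
  have hφ_G : ∑ j, conj (φ (G j)) • G j = 0 := by
    ext b
    simpa [hφ_F, coeff_sum, mul_comm] using congr(conj (φ $(hcoeff b))).symm
  have hnorm : ∑ j, ‖φ (G j)‖ ^ 2 = 0 := by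
    have := congr(φ $hφ_G)
    simp only [map_sum, map_smul, smul_eq_mul, Complex.conj_mul', map_zero] at this
    exact_mod_cast this
  have := (Finset.sum_eq_zero_iff_of_nonneg fun _ _ => sq_nonneg _).1 hnorm j (Finset.mem_univ j)
  exact hφj (by simpa using this)

theorem sum_norm_sq_eval_mul_prod_X {ι : Type*} [Fintype σ] [Fintype ι]
    (a : ι → MvPolynomial σ ℂ) (d : ℕ) (z : σ → ℂ) :
    ∑ x : ι × (Fin d → σ), ‖eval z (a x.1 * ∏ s, X (x.2 s))‖ ^ 2 =
      (∑ j, ‖eval z (a j)‖ ^ 2) * (∑ i, ‖z i‖ ^ 2) ^ d := by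
  simp only [map_mul, map_prod, eval_X, norm_mul, norm_prod, mul_pow, ← Finset.prod_pow]
  rw [Fintype.sum_prod_type, Fintype.sum_pow, Finset.sum_mul_sum]

end MvPolynomial

/-- If `r = ‖f‖² − ‖g‖²` is bihomogeneous of bidegree `(m,m)` on `ℂⁿ` with signature
pair `(P,N)` of full rank `P + N = C(m+n-1,m)`, and `r(z,z̄)·‖z‖^{2d}` is a squared
norm, then `P ≥ C(m+d+n-1, m+d) / C(d+n-1, d)`. -/
theorem full_rank_bound (n m d P N : ℕ)
    (f : Fin P → MvPolynomial (Fin n) ℂ)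
    (g : Fin N → MvPolynomial (Fin n) ℂ)
    (hf : ∀ j, (f j).IsHomogeneous m)
    (hg : ∀ j, (g j).IsHomogeneous m)
    (hind : LinearIndependent ℂ (Sum.elim f g))
    (hrank : P + N = (m + n - 1).choose m)
    (hsq : ∃ (K : ℕ) (h : Fin K → MvPolynomial (Fin n) ℂ),
      ∀ z : Fin n → ℂ,
        ((∑ j, ‖eval z (f j)‖ ^ 2) - ∑ j, ‖eval z (g j)‖ ^ 2) * (∑ i, ‖z i‖ ^ 2) ^ d =
          ∑ j, ‖eval z (h j)‖ ^ 2) :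
    (P : ℚ) ≥ ((m + d + n - 1).choose (m + d) : ℚ) / ((d + n - 1).choose d : ℚ) := by
  obtain ⟨K, h, hsq⟩ := hsq
  have hspan : span ℂ (range (Sum.elim f g)) = homogeneousSubmodule (Fin n) ℂ m :=
    hind.span_eq_of_card_eq_finrank (Sum.forall.2 ⟨hf, hg⟩)
      (by simp [finrank_homogeneousSubmodule, hrank])
  have hgf : span ℂ (range g) * homogeneousSubmodule (Fin n) ℂ d ≤
      span ℂ (range f) * homogeneousSubmodule (Fin n) ℂ d := by
    simp only [← span_range_prod_X_eq_homogeneousSubmodule, span_range_mul_span_range]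
    refine (span_mono ?_).trans (span_range_le_of_sum_norm_sq_eq _
      (Sum.elim (fun x : Fin N × (Fin d → Fin n) => g x.1 * ∏ s, X (x.2 s)) h) fun z => ?_)
    · rw [Set.Sum.elim_range]
      exact subset_union_left
    · rw [Fintype.sum_sum_type]
      simp only [Sum.elim_inl, Sum.elim_inr]
      rw [sum_norm_sq_eval_mul_prod_X, sum_norm_sq_eval_mul_prod_X, ← hsq z]
      ring
  have hle : homogeneousSubmodule (Fin n) ℂ (m + d) ≤
      span ℂ (range f) * homogeneousSubmodule (Fin n) ℂ d := by
    rw [homogeneousSubmodule_add_eq_mul, ← hspan, Set.Sum.elim_range, span_union, Submodule.sup_mul]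
    exact sup_le le_rfl hgf
  have hdim := finrank_le_of_le_span_range_mul hle
  simp only [finrank_homogeneousSubmodule, Fintype.card_fin] at hdim
  exact div_le_of_le_mul₀ (by positivity) (by positivity) (by exact_mod_cast hdim)
end

section
/- Let I be a homogeneous ideal in ℂ[z_1,…,z_n] generated by at least n linearly independent homogeneous polynomials of degree m. Then dim_ℂ I_{m+1} ≥ n(n+1)/2. -/
open MvPolynomial Finset
open scoped MonomialOrder

/-!
Fix a monomial order. For a finite-dimensional space `V` of polynomials, the leading exponents
of its nonzero elements are exactly `dim V` in number: polynomials with distinct leading exponents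
are linearly independent, and a polynomial is determined by its coefficients at these exponents.
The span of the generators has dimension at least `n`, so it has `n` distinct leading exponents
`t`; multiplying by the variables gives elements of `I_{m+1}` with leading exponents `t + eᵢ`.
Two distinct exponents share at most one such shift, so the `k`-th exponent contributes at least
`n - (k - 1)` new ones, for a total of at least `n + (n - 1) + ⋯ + 1 = n(n+1)/2`.
-/

namespace Finsupp

variable {σ : Type*} [Fintype σ] [DecidableEq σ]

noncomputable def unitShifts (μ : σ →₀ ℕ) : Finset (σ →₀ ℕ) :=
  univ.image fun i => single i 1 + μ

theorem card_unitShifts (μ : σ →₀ ℕ) : #(unitShifts μ) = Fintype.card σ :=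
  card_image_of_injective _ fun _ _ h =>
    single_left_injective one_ne_zero (add_right_cancel h)

-- If `eᵢ + μ = eⱼ + t` with `μ ≠ t`, then `i ≠ j` and `t i = μ i + 1`; this pins down `i`.
theorem card_unitShifts_inter_le_one {μ t : σ →₀ ℕ} (hμt : μ ≠ t) :
    #(unitShifts μ ∩ unitShifts t) ≤ 1 := by
  have coord_eq : ∀ i j, single i 1 + μ = single j 1 + t → t i = μ i + 1 := by
    intro i j h
    obtain rfl | hij := eq_or_ne i j
    · exact absurd (add_left_cancel h) hμt
    have := DFunLike.congr_fun h i
    simp only [add_apply, single_eq_same, single_eq_of_ne hij] at this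
    omega
  rw [card_le_one]
  simp only [unitShifts, mem_inter, mem_image, mem_univ, true_and]
  rintro _ ⟨⟨i, rfl⟩, j, hj⟩ _ ⟨⟨i', rfl⟩, j', hj'⟩
  obtain rfl : i = i' := by
    by_contra hii'
    have h1 := DFunLike.congr_fun hj' i
    have h2 := coord_eq i j hj.symm
    simp only [add_apply, single_eq_of_ne hii'] at h1
    rw [single_apply] at h1
    split_ifs at h1 <;> omega
  rfl

theorem card_biUnion_unitShifts_insert {μ : σ →₀ ℕ} {T : Finset (σ →₀ ℕ)} (hμT : μ ∉ T) :
    #(T.biUnion unitShifts) + Fintype.card σ ≤ #((insert μ T).biUnion unitShifts) + #T := by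
  have hinter : #(unitShifts μ ∩ T.biUnion unitShifts) ≤ #T := by
    rw [inter_biUnion]
    simpa using card_biUnion_le_card_mul T _ 1 fun t (ht : t ∈ T) =>
      card_unitShifts_inter_le_one fun h : μ = t => hμT (h ▸ ht)
  have := card_union_add_card_inter (unitShifts μ) (T.biUnion unitShifts)
  rw [biUnion_insert, card_unitShifts] at *
  omega

-- Subtraction-free form of `#(T.biUnion unitShifts) ≥ ∑ j < #T, (card σ - j)`.
theorem card_mul_le_card_biUnion_unitShifts (T : Finset (σ →₀ ℕ)) :
    #T * (2 * Fintype.card σ + 1) ≤ 2 * #(T.biUnion unitShifts) + #T * #T := by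
  induction T using Finset.induction_on with
  | empty => simp
  | insert μ T hμT ih =>
    have := card_biUnion_unitShifts_insert hμT
    rw [card_insert_of_notMem hμT]
    nlinarith

end Finsupp

namespace MonomialOrder

variable {σ R K : Type*} (m : MonomialOrder σ)

def degreeSet [CommSemiring R] (V : Submodule R (MvPolynomial σ R)) : Set (σ →₀ ℕ) :=
  {d | ∃ p ∈ V, p ≠ 0 ∧ m.degree p = d}

theorem linearIndependent_of_injective_degree [CommRing R] [NoZeroDivisors R] {ι : Type*}
    {v : ι → MvPolynomial σ R} (hv : ∀ i, v i ≠ 0)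
    (hd : Function.Injective fun i => m.degree (v i)) : LinearIndependent R v := by
  classical
  rw [linearIndependent_iff']
  intro s
  induction s using Finset.induction_on_max_value (fun i => m.toSyn (m.degree (v i))) with
  | empty => simp
  | insert a s has hmax ih =>
    intro g hsum i hi
    have hlt : ∀ j ∈ s, m.degree (v j) ≺[m] m.degree (v a) := fun j hj =>
      (hmax j hj).lt_of_ne fun h => has (hd (m.toSyn.injective h) ▸ hj)
    have hga : g a = 0 := by
      have hcoeff := congr_arg (coeff (m.degree (v a))) hsum
      rw [sum_insert has, coeff_add, coeff_sum, sum_eq_zero fun j hj => by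
        rw [coeff_smul, m.coeff_eq_zero_of_lt (hlt j hj), smul_zero]] at hcoeff
      simpa [m.coeff_degree_ne_zero_iff.2 (hv a)] using hcoeff
    rw [sum_insert has, hga, zero_smul, zero_add] at hsum
    rcases mem_insert.1 hi with rfl | hi
    exacts [hga, ih g hsum i hi]

section Field

variable [Field K] {V : Submodule K (MvPolynomial σ K)}

theorem card_le_finrank_of_subset_degreeSet [FiniteDimensional K V] {D : Finset (σ →₀ ℕ)}
    (hD : ↑D ⊆ m.degreeSet V) : #D ≤ Module.finrank K V := by
  choose p hpV hp0 hpd using fun d : D => hD d.2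
  have hind : LinearIndependent K fun d => (⟨p d, hpV d⟩ : V) :=
    .of_comp V.subtype <| m.linearIndependent_of_injective_degree hp0 fun d e h =>
      Subtype.ext (by simpa [hpd] using h)
  simpa using hind.fintype_card_le_finrank

theorem finrank_le_card_of_degreeSet_subset {D : Finset (σ →₀ ℕ)}
    (hD : m.degreeSet V ⊆ ↑D) : Module.finrank K V ≤ #D := by
  let φ : V →ₗ[K] (D → K) := LinearMap.pi fun d => (lcoeff K (d : σ →₀ ℕ)).comp V.subtype
  have hφ : Function.Injective φ := by
    rw [← LinearMap.ker_eq_bot, LinearMap.ker_eq_bot']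
    rintro ⟨p, hpV⟩ hφp
    by_contra hp
    have hp0 : p ≠ 0 := fun h => hp (Subtype.ext h)
    have := congr_fun hφp ⟨m.degree p, hD ⟨p, hpV, hp0, rfl⟩⟩
    exact m.coeff_degree_ne_zero_iff.2 hp0 this
  simpa using LinearMap.finrank_le_finrank_of_injective hφ

theorem finite_degreeSet [FiniteDimensional K V] : (m.degreeSet V).Finite := by
  by_contra hinf
  obtain ⟨D, hDV, hD⟩ := Set.Infinite.exists_subset_card_eq hinf (Module.finrank K V + 1)
  have := m.card_le_finrank_of_subset_degreeSet hDV
  omega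

theorem exists_finset_subset_degreeSet [FiniteDimensional K V] :
    ∃ D : Finset (σ →₀ ℕ), ↑D ⊆ m.degreeSet V ∧ Module.finrank K V ≤ #D :=
  ⟨(m.finite_degreeSet (V := V)).toFinset, by simp,
    m.finrank_le_card_of_degreeSet_subset (by simp)⟩

end Field

theorem single_add_mem_degreeSet [CommRing R] [IsDomain R] {V W : Submodule R (MvPolynomial σ R)}
    {i : σ} (hVW : ∀ p ∈ V, X i * p ∈ W) {d : σ →₀ ℕ} (hd : d ∈ m.degreeSet V) :
    Finsupp.single i 1 + d ∈ m.degreeSet W := by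
  obtain ⟨p, hpV, hp0, rfl⟩ := hd
  exact ⟨X i * p, hVW p hpV, mul_ne_zero (X_ne_zero i) hp0,
    by rw [m.degree_mul (X_ne_zero i) hp0, m.degree_X]⟩

theorem biUnion_unitShifts_subset_degreeSet [Fintype σ] [DecidableEq σ] [CommRing R] [IsDomain R]
    {V W : Submodule R (MvPolynomial σ R)} (hVW : ∀ i, ∀ p ∈ V, X i * p ∈ W)
    {T : Finset (σ →₀ ℕ)} (hT : ↑T ⊆ m.degreeSet V) :
    ↑(T.biUnion Finsupp.unitShifts) ⊆ m.degreeSet W := by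
  intro e he
  simp only [coe_biUnion, Finsupp.unitShifts, coe_image, coe_univ, Set.image_univ,
    Set.mem_iUnion, Set.mem_range] at he
  obtain ⟨d, hd, i, rfl⟩ := he
  exact m.single_add_mem_degreeSet (hVW i) (hT hd)

end MonomialOrder

/-- If `I ⊆ ℂ[z₁,…,zₙ]` is generated by at least `n` linearly independent homogeneous
polynomials of degree `m`, then `dim_ℂ I_{m+1} ≥ n(n+1)/2`. -/
theorem ideal_piece_dim_lower_bound_many_gens (n m P : ℕ) (hPn : n ≤ P)
    (f : Fin P → MvPolynomial (Fin n) ℂ)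
    (hf : ∀ j, (f j).IsHomogeneous m)
    (hind : LinearIndependent ℂ f) :
    n * (n + 1) / 2 ≤
      Module.finrank ℂ
        ((Submodule.restrictScalars ℂ (Ideal.span (Set.range f))) ⊓
          homogeneousSubmodule (Fin n) ℂ (m + 1) :
          Submodule ℂ (MvPolynomial (Fin n) ℂ)) := by
  classical
  set N : Submodule ℂ (MvPolynomial (Fin n) ℂ) :=
    (Ideal.span (Set.range f)).restrictScalars ℂ ⊓ homogeneousSubmodule (Fin n) ℂ (m + 1)
  have : FiniteDimensional ℂ N := Submodule.finiteDimensional_of_le fun p hp =>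
    (mem_restrictTotalDegree _ _ _).2 hp.2.totalDegree_le
  have hXN : ∀ i, ∀ p ∈ Submodule.span ℂ (Set.range f), X i * p ∈ N := by
    intro i p hp
    refine ⟨Ideal.mul_mem_left _ _ (Submodule.span_le_restrictScalars ℂ _ _ hp), ?_⟩
    have hpm : p.IsHomogeneous m :=
      (Submodule.span_le (p := homogeneousSubmodule (Fin n) ℂ m)).2
        (Set.range_subset_iff.2 hf) hp
    simpa [add_comm] using (isHomogeneous_X ℂ i).mul hpm
  have : FiniteDimensional ℂ (Submodule.span ℂ (Set.range f)) :=
    .span_of_finite ℂ (Set.finite_range f)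
  obtain ⟨D, hDV, hD⟩ := MonomialOrder.lex.exists_finset_subset_degreeSet
    (V := Submodule.span ℂ (Set.range f))
  rw [finrank_span_eq_card hind, Fintype.card_fin] at hD
  obtain ⟨T, hTD, hT⟩ := exists_subset_card_eq (hPn.trans hD)
  have hshifts := Finsupp.card_mul_le_card_biUnion_unitShifts T
  rw [hT, Fintype.card_fin] at hshifts
  calc n * (n + 1) / 2 ≤ #(T.biUnion Finsupp.unitShifts) := Nat.div_le_of_le_mul (by nlinarith)
    _ ≤ Module.finrank ℂ N := MonomialOrder.lex.card_le_finrank_of_subset_degreeSet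
      (MonomialOrder.lex.biUnion_unitShifts_subset_degreeSet hXN ((coe_subset.2 hTD).trans hDV))
end

section
/- Let r be a bihomogeneous polynomial of bidegree (m,m) on ℂ^n with signature pair (P, 1) (i.e., N = 1). If r(z,z̄)·‖z‖² is a squared norm of a holomorphic polynomial map, then P² + P ≥ 2n. -/
/-!
The hypothesis says `‖(z_a f_j)_{a,j}‖² = ‖h‖² + ‖(z_a g)_a‖²`. Polarizing such an identity of
squared norms and comparing coefficients in `z̄` shows that every `z_a g` lies in the span of the
`nP` polynomials `z_a f_j`.

On the other hand, the span of `k` linearly independent polynomials `F_j` has exactly `k` leading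
monomials `d_j`; multiplying by the variables gives the leading monomials `e_a + d_j` of the span of
the `z_a F_j`, and two distinct `d_j, d_l` produce at most one coincidence `e_a + d_j = e_b + d_l`.
Hence the `z_a F_j` span a space of dimension at least `nk - k(k-1)/2`. For `F = (f, g)`,
`k = P + 1`, this dimension is at most `nP`, which gives `2n ≤ P(P+1)`.
-/

open MvPolynomial Module Finset
open scoped Pointwise

namespace MvPolynomial

variable {σ : Type*}

theorem eq_zero_of_eval_sumElim_conj_eq_zero {R : MvPolynomial (σ ⊕ σ) ℂ}
    (hR : ∀ z : σ → ℂ, eval (Sum.elim z (starRingEnd ℂ ∘ z)) R = 0) : R = 0 := by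
  open Complex in
  -- `bind₁ u R` is `R` at `(x + iy, x - iy)`, which vanishes for real `x, y`.
  let u : σ ⊕ σ → MvPolynomial (σ ⊕ σ) ℂ :=
    Sum.elim (fun i => X (.inl i) + C I * X (.inr i)) (fun i => X (.inl i) - C I * X (.inr i))
  have eval_bind₁_u : ∀ x, eval x (bind₁ u R) =
      eval (Sum.elim (fun i => x (.inl i) + I * x (.inr i))
        (fun i => x (.inl i) - I * x (.inr i))) R := fun x => by
    rw [← aeval_eq_eval, aeval_bind₁]
    refine congrArg (fun v => eval v R) (_root_.funext fun j => ?_)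
    rcases j with i | i <;> simp [u]
  have hreal : bind₁ u R = 0 := by
    refine funext_set (fun _ => Set.range ((↑) : ℝ → ℂ)) (fun _ => ?_) fun x hx => ?_
    · exact Set.infinite_range_of_injective Complex.ofReal_injective
    · have hconj : ∀ j, starRingEnd ℂ (x j) = x j := fun j => by
        obtain ⟨r, hr⟩ := hx j trivial
        rw [← hr, Complex.conj_ofReal]
      rw [eval_bind₁_u, map_zero, ← hR (fun i => x (.inl i) + I * x (.inr i))]
      refine congrArg (fun v => eval v R) (_root_.funext fun j => ?_)
      rcases j with i | i <;> simp [hconj, sub_eq_add_neg]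
  refine funext fun y => ?_
  have := eval_bind₁_u (Sum.elim (fun i => (y (.inl i) + y (.inr i)) / 2)
    (fun i => (y (.inl i) - y (.inr i)) / (2 * I)))
  rw [hreal, map_zero] at this
  rw [map_zero, this]
  refine congrArg (fun v => eval v R) (_root_.funext fun j => ?_)
  rcases j with i | i <;> (simp only [Sum.elim_inl, Sum.elim_inr]; field_simp; ring)

variable {ι κ : Type*} [Fintype ι] [Fintype κ]

noncomputable def normSqPolarization (p : ι → MvPolynomial σ ℂ) : MvPolynomial (σ ⊕ σ) ℂ :=
  ∑ i, rename Sum.inl (p i) * rename Sum.inr (map (starRingEnd ℂ) (p i))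

theorem eval_normSqPolarization (p : ι → MvPolynomial σ ℂ) (z w : σ → ℂ) :
    eval (Sum.elim z w) (normSqPolarization p) =
      eval w (∑ i, eval z (p i) • map (starRingEnd ℂ) (p i)) := by
  simp [normSqPolarization, eval_rename]

theorem eval_normSqPolarization_conj (p : ι → MvPolynomial σ ℂ) (z : σ → ℂ) :
    eval (Sum.elim z (starRingEnd ℂ ∘ z)) (normSqPolarization p) =
      ∑ i, (‖eval z (p i)‖ ^ 2 : ℝ) := by
  have eval_map_conj (r : MvPolynomial σ ℂ) :
      eval (starRingEnd ℂ ∘ z) (map (starRingEnd ℂ) r) = starRingEnd ℂ (eval z r) := by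
    rw [eval_map, eval, coe_eval₂Hom, eval₂_comp_left]; rfl
  simp [eval_normSqPolarization, eval_map_conj, Complex.mul_conj, Complex.normSq_eq_norm_sq]

theorem sum_conj_coeff_smul_eq_of_sum_norm_sq_eq {p : ι → MvPolynomial σ ℂ}
    {q : κ → MvPolynomial σ ℂ}
    (h : ∀ z : σ → ℂ, ∑ i, ‖eval z (p i)‖ ^ 2 = ∑ k, ‖eval z (q k)‖ ^ 2) (d : σ →₀ ℕ) :
    ∑ i, starRingEnd ℂ (coeff d (p i)) • p i = ∑ k, starRingEnd ℂ (coeff d (q k)) • q k := by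
  have hpol : normSqPolarization p = normSqPolarization q := by
    rw [← sub_eq_zero]
    refine eq_zero_of_eval_sumElim_conj_eq_zero fun z => ?_
    rw [map_sub, sub_eq_zero, eval_normSqPolarization_conj, eval_normSqPolarization_conj]
    exact_mod_cast congrArg ((↑) : ℝ → ℂ) (h z)
  refine funext fun z => ?_
  have := congrArg (coeff d) (funext fun w => by
      rw [← eval_normSqPolarization, ← eval_normSqPolarization, hpol] :
    ∑ i, eval z (p i) • map (starRingEnd ℂ) (p i) = ∑ k, eval z (q k) • map (starRingEnd ℂ) (q k))
  simpa [coeff_sum, coeff_map, mul_comm] using this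

theorem mem_span_of_sum_conj_coeff_smul_eq {p : ι → MvPolynomial σ ℂ} {q : κ → MvPolynomial σ ℂ}
    (h : ∀ d, ∑ i, starRingEnd ℂ (coeff d (p i)) • p i = ∑ k, starRingEnd ℂ (coeff d (q k)) • q k)
    (k : κ) : q k ∈ Submodule.span ℂ (Set.range p) := by
  by_contra hk
  -- A functional `φ` vanishing on the span kills `∑ conj (φ q_k) • q_k`, so `∑ |φ q_k|² = 0`.
  obtain ⟨φ, hφk, hφp⟩ := Submodule.exists_dual_map_eq_bot_of_notMem hk inferInstance
  have hφp' : ∀ i, φ (p i) = 0 := fun i =>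
    (Submodule.mem_bot ℂ).1 <| hφp ▸ Submodule.mem_map_of_mem (Submodule.subset_span ⟨i, rfl⟩)
  have hsum : ∑ k, starRingEnd ℂ (φ (q k)) • q k = 0 := by
    ext d
    have := congrArg φ (h d)
    simp only [map_sum, map_smul, hφp', smul_eq_mul, mul_zero, Finset.sum_const_zero] at this
    simpa [coeff_sum, mul_comm] using congrArg (starRingEnd ℂ) this.symm
  have hnorm : ∑ k, Complex.normSq (φ (q k)) = 0 := by
    have := congrArg φ hsum
    simp only [map_sum, map_smul, map_zero, smul_eq_mul] at this
    exact_mod_cast (by simpa [mul_comm, Complex.mul_conj] using this :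
      ∑ k, (Complex.normSq (φ (q k)) : ℂ) = 0)
  exact hφk <| Complex.normSq_eq_zero.1 <|
    (Finset.sum_eq_zero_iff_of_nonneg fun _ _ => Complex.normSq_nonneg _).1 hnorm k
      (Finset.mem_univ k)

theorem mem_span_range_of_sum_norm_sq_eq {p : ι → MvPolynomial σ ℂ} {q : κ → MvPolynomial σ ℂ}
    (h : ∀ z : σ → ℂ, ∑ i, ‖eval z (p i)‖ ^ 2 = ∑ k, ‖eval z (q k)‖ ^ 2) (k : κ) :
    q k ∈ Submodule.span ℂ (Set.range p) :=
  mem_span_of_sum_conj_coeff_smul_eq (sum_conj_coeff_smul_eq_of_sum_norm_sq_eq h) k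

end MvPolynomial

namespace MonomialOrder

variable {σ K : Type*} [Field K] (m : MonomialOrder σ)

theorem linearIndependent_of_injective_degree_s16 {ι : Type*} {p : ι → MvPolynomial σ K}
    (hp : ∀ i, p i ≠ 0) (hdeg : Function.Injective fun i => m.degree (p i)) :
    LinearIndependent K p := by
  classical
  rw [linearIndependent_iff']
  intro s
  induction s using Finset.induction_on_max_value (fun i => m.toSyn (m.degree (p i))) with
  | empty => simp
  | insert a s ha hmax ih =>
    intro c hc
    have hlt : ∀ i ∈ s, m.degree (p i) ≺[m] m.degree (p a) := fun i hi =>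
      lt_of_le_of_ne (hmax i hi) fun h => ha (hdeg (m.toSyn.injective h) ▸ hi)
    have hca : c a = 0 := by
      have := congrArg (coeff (m.degree (p a))) hc
      rw [Finset.sum_insert ha, coeff_add, coeff_sum, Finset.sum_eq_zero fun i hi => by
        rw [coeff_smul, m.coeff_eq_zero_of_lt (hlt i hi), smul_zero]] at this
      simpa [m.coeff_degree_ne_zero_iff.2 (hp a)] using this
    rw [Finset.sum_insert ha, hca, zero_smul, zero_add] at hc
    intro i hi
    rcases Finset.mem_insert.1 hi with rfl | hi
    · exact hca
    · exact ih c hc i hi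

theorem card_le_finrank_of_forall_exists_degree_eq (U : Submodule K (MvPolynomial σ K))
    [FiniteDimensional K U] (S : Finset (σ →₀ ℕ))
    (hS : ∀ d ∈ S, ∃ u ∈ U, u ≠ 0 ∧ m.degree u = d) : S.card ≤ finrank K U := by
  choose u huU hu0 hdeg using hS
  have hli : LinearIndependent K fun d : S => (⟨u d d.2, huU d d.2⟩ : U) := by
    refine LinearIndependent.of_comp U.subtype ?_
    refine m.linearIndependent_of_injective_degree_s16 (fun d => hu0 d d.2) fun d e hde => ?_
    exact Subtype.ext (by simpa [hdeg] using hde)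
  simpa using hli.fintype_card_le_finrank

theorem finrank_le_card_of_forall_degree_mem (U : Submodule K (MvPolynomial σ K))
    (S : Finset (σ →₀ ℕ)) (hS : ∀ u ∈ U, u ≠ 0 → m.degree u ∈ S) : finrank K U ≤ S.card := by
  let coeffs : U →ₗ[K] S → K := LinearMap.pi fun d => (lcoeff K d.1).comp U.subtype
  have hinj : Function.Injective coeffs := by
    rw [← LinearMap.ker_eq_bot, Submodule.eq_bot_iff]
    intro u hu
    by_contra hu0
    have hu0' : (u : MvPolynomial σ K) ≠ 0 := by simpa using hu0
    exact m.coeff_degree_ne_zero_iff.2 hu0' <|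
      congrFun (LinearMap.mem_ker.1 hu) ⟨_, hS u u.2 hu0'⟩
  simpa using LinearMap.finrank_le_finrank_of_injective hinj

end MonomialOrder

namespace Finsupp

variable {σ : Type*} [DecidableEq σ]

theorem eq_of_single_add_eq_single_add {d d' : σ →₀ ℕ} (hd : d ≠ d') {a b a' b' : σ}
    (h : single a 1 + d = single b 1 + d') (h' : single a' 1 + d = single b' 1 + d') :
    a = a' := by
  have hba : b ≠ a := by
    rintro rfl
    exact hd (add_left_cancel h)
  by_contra haa'
  have ha := DFunLike.congr_fun h a
  have ha' := DFunLike.congr_fun h' a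
  simp [single_apply, hba, Ne.symm haa'] at ha ha'
  split_ifs at ha' <;> omega

variable [Fintype σ]

theorem card_mul_le_card_add_choose (S : Finset (σ →₀ ℕ)) :
    Fintype.card σ * #S ≤ #(univ.image (single · 1) + S) + (#S).choose 2 := by
  induction S using Finset.induction_on with
  | empty => simp
  | insert d S hd ih =>
    set V : Finset (σ →₀ ℕ) := univ.image (single · 1)
    have hcardV : #(V + {d}) = Fintype.card σ := by
      rw [card_add_singleton, card_image_of_injective _ (single_left_injective one_ne_zero),
        card_univ]
    have hinter : #((V + {d}) ∩ (V + S)) ≤ #S := by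
      have : (V + {d}) ∩ (V + S) = S.biUnion fun d' => (V + {d}) ∩ (V + {d'}) := by
        ext; simp only [mem_inter, mem_add, mem_biUnion, mem_singleton]; aesop
      rw [this]
      refine card_biUnion_le.trans <|
        (sum_le_card_nsmul S _ 1 fun d' hd' => card_le_one.2 ?_).trans (by simp)
      simp only [mem_inter, mem_add, mem_singleton, V, mem_image, mem_univ, true_and]
      rintro _ ⟨⟨_, ⟨a, rfl⟩, _, rfl, rfl⟩, _, ⟨b, rfl⟩, _, rfl, h⟩ _
        ⟨⟨_, ⟨a', rfl⟩, _, rfl, rfl⟩, _, ⟨b', rfl⟩, _, rfl, h'⟩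
      rw [eq_of_single_add_eq_single_add (ne_of_mem_of_not_mem hd' hd).symm h.symm h'.symm]
    rw [card_insert_of_notMem hd, insert_eq, add_union, Nat.choose_succ_succ', Nat.choose_one_right]
    have := card_union_add_card_inter (V + {d}) (V + S)
    nlinarith

end Finsupp

namespace MvPolynomial

variable {σ K : Type*} [Field K]

theorem card_mul_le_finrank_span_X_mul_add_choose [Fintype σ] {ι : Type*} [Fintype ι]
    {F : ι → MvPolynomial σ K} (hF : LinearIndependent K F) :
    Fintype.card σ * Fintype.card ι ≤
      finrank K (Submodule.span K (Set.range fun x : σ × ι => X x.1 * F x.2)) +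
        (Fintype.card ι).choose 2 := by
  classical
  let _ : LinearOrder σ := LinearOrder.lift' _ (Fintype.equivFin σ).injective
  let m : MonomialOrder σ := .lex
  set W := Submodule.span K (Set.range F)
  set U := Submodule.span K (Set.range fun x : σ × ι => X x.1 * F x.2)
  have X_mul_mem : ∀ a, ∀ w ∈ W, X a * w ∈ U := fun a w hw => by
    refine Submodule.span_induction (fun _ ⟨i, hi⟩ => hi ▸ Submodule.subset_span ⟨(a, i), rfl⟩)
      (by simp) (fun _ _ _ _ hx hy => by rw [mul_add]; exact U.add_mem hx hy)
      (fun c _ _ hx => by rw [mul_smul_comm]; exact U.smul_mem c hx) hw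
  let S : Finset (σ →₀ ℕ) := (univ.biUnion fun i => (F i).support).filter
    fun d => ∃ w ∈ W, w ≠ 0 ∧ m.degree w = d
  have : FiniteDimensional K W := .span_of_finite K (Set.finite_range _)
  have : FiniteDimensional K U := .span_of_finite K (Set.finite_range _)
  have hS : #S = Fintype.card ι := by
    rw [← finrank_span_eq_card hF]
    refine le_antisymm ?_ ?_
    · exact m.card_le_finrank_of_forall_exists_degree_eq W S fun d hd => (mem_filter.1 hd).2
    · refine m.finrank_le_card_of_forall_degree_mem W S fun w hw hw0 => mem_filter.2
        ⟨?_, w, hw, hw0, rfl⟩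
      have hW : W ≤ restrictSupport K ↑(univ.biUnion fun i => (F i).support) :=
        Submodule.span_le.2 fun _ ⟨i, hi⟩ => hi ▸ by
          simpa [mem_restrictSupport_iff] using
            Set.subset_iUnion (fun j => (↑(F j).support : Set (σ →₀ ℕ))) i
      exact hW hw (m.degree_mem_support hw0)
  have hshifts : #(univ.image (Finsupp.single · 1) + S) ≤ finrank K U := by
    refine m.card_le_finrank_of_forall_exists_degree_eq U _ fun d hd => ?_
    obtain ⟨_, ha, e, he, rfl⟩ := mem_add.1 hd
    obtain ⟨a, -, rfl⟩ := mem_image.1 ha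
    obtain ⟨-, w, hw, hw0, rfl⟩ := mem_filter.1 he
    refine ⟨X a * w, X_mul_mem a w hw, mul_ne_zero (X_ne_zero a) hw0, ?_⟩
    rw [m.degree_mul (X_ne_zero a) hw0, m.degree_X]
  have := Finsupp.card_mul_le_card_add_choose S
  rw [hS] at this
  omega

end MvPolynomial

theorem signature_P_one_general (n P : ℕ)
    (f : Fin P → MvPolynomial (Fin n) ℂ)
    (g : MvPolynomial (Fin n) ℂ)
    (hind : LinearIndependent ℂ (Sum.elim f (fun _ : Fin 1 => g)))
    (hsq : ∃ (K : ℕ) (h : Fin K → MvPolynomial (Fin n) ℂ),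
      ∀ z : Fin n → ℂ,
        ((∑ j, ‖eval z (f j)‖ ^ 2) - ‖eval z g‖ ^ 2) * (∑ i, ‖z i‖ ^ 2) =
          ∑ j, ‖eval z (h j)‖ ^ 2) :
    2 * n ≤ P ^ 2 + P := by
  obtain ⟨K, h, hh⟩ := hsq
  have hnorm : ∀ z : Fin n → ℂ, ∑ x : Fin n × Fin P, ‖eval z (X x.1 * f x.2)‖ ^ 2 =
      ∑ k, ‖eval z (Sum.elim h (fun i => X i * g) k)‖ ^ 2 := fun z => by
    simp only [Fintype.sum_prod_type, Fintype.sum_sum_type, Sum.elim_inl, Sum.elim_inr, map_mul,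
      eval_X, norm_mul, mul_pow, ← Finset.mul_sum, ← Finset.sum_mul]
    linear_combination hh z
  have hspan : Submodule.span ℂ (Set.range fun x : Fin n × (Fin P ⊕ Fin 1) =>
        X x.1 * Sum.elim f (fun _ => g) x.2) ≤
      Submodule.span ℂ (Set.range fun x : Fin n × Fin P => X x.1 * f x.2) := by
    refine Submodule.span_le.2 ?_
    rintro _ ⟨⟨i, j | _⟩, rfl⟩
    · exact Submodule.subset_span ⟨(i, j), rfl⟩
    · exact mem_span_range_of_sum_norm_sq_eq hnorm (.inr i)
  have : FiniteDimensional ℂ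
      (Submodule.span ℂ (Set.range fun x : Fin n × Fin P => X x.1 * f x.2)) :=
    .span_of_finite ℂ (Set.finite_range _)
  have hbound := card_mul_le_finrank_span_X_mul_add_choose hind
  have hrank := (Submodule.finrank_mono hspan).trans (finrank_range_le_card _)
  have hchoose : (P + 1).choose 2 * 2 = (P + 1) * P := by
    rw [Nat.choose_two_right, Nat.div_mul_cancel (Nat.even_mul_pred_self (P + 1)).two_dvd]
    simp
  simp only [Fintype.card_fin, Fintype.card_sum, Fintype.card_prod] at hbound hrank
  nlinarith

/-- If `r = ‖f‖² − |g|²` is bihomogeneous of bidegree `(m,m)` on `ℂⁿ` with signature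
pair `(P,1)` (the `P` components of `f` and the single polynomial `g` homogeneous of
degree `m` and together linearly independent), and `r(z,z̄)·‖z‖²` is a squared norm,
then `P² + P ≥ 2n`. -/
theorem signature_P_one (n m P : ℕ)
    (f : Fin P → MvPolynomial (Fin n) ℂ)
    (g : MvPolynomial (Fin n) ℂ)
    (hf : ∀ j, (f j).IsHomogeneous m)
    (hg : g.IsHomogeneous m)
    (hind : LinearIndependent ℂ (Sum.elim f (fun _ : Fin 1 => g)))
    (hsq : ∃ (K : ℕ) (h : Fin K → MvPolynomial (Fin n) ℂ),
      ∀ z : Fin n → ℂ,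
        ((∑ j, ‖eval z (f j)‖ ^ 2) - ‖eval z g‖ ^ 2) * (∑ i, ‖z i‖ ^ 2) =
          ∑ j, ‖eval z (h j)‖ ^ 2) :
    2 * n ≤ P ^ 2 + P :=
  signature_P_one_general n P f g hind hsq
end

section
/- For P < n and all m ≥ 1, the Macaulay operator satisfies (D_m − P)^{<m>} = D_{m+1} − (nP − P(P−1)/2), where D_k = C(k+n-1, k). -/
/-- `MacaulayRep m c J k` says that `c = C(k m, m) + ⋯ + C(k J, J)` is the `m`-th
Macaulay representation of `c` (top entries `k m > ⋯ > k J ≥ J > 0`). -/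
def MacaulayRep (m c J : ℕ) (k : ℕ → ℕ) : Prop :=
  0 < J ∧ J ≤ m ∧ StrictMonoOn k (Set.Icc J m) ∧ J ≤ k J ∧
    c = ∑ j ∈ Finset.Icc J m, (k j).choose j

/-- `MacaulayStep s x y` says that `y = x^{<s>}`, the Macaulay operator in degree `s`
applied to `x`. -/
def MacaulayStep (s x y : ℕ) : Prop :=
  ∃ J k, MacaulayRep s x J k ∧ y = ∑ j ∈ Finset.Icc J s, (k j + 1).choose (j + 1)

/-!
For `0 < P < n`, subtracting `P` from `D_m = C(n, 1) + ∑_{j=2}^m C(j+n-2, j)` (a diagonal of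
Pascal's triangle) only lowers the last entry, so `D_m - P` has the Macaulay representation with
`k₁ = n - P` and `k_j = j + n - 2` for `j ≥ 2`; for `P = 0` it is the single term `C(m+n-1, m)`.
Shifting the entries and summing the diagonal again gives
`D_{m+1} - C(n+1, 2) + C(n-P+1, 2)`, and `C(n+1, 2) - C(n-P+1, 2) = nP - P(P-1)/2`.
The representation is unique (its top entry is the largest `k` with `C(k, m) ≤ c`), so this is
the value of the operator whichever representation the hypothesis provides.
-/

open Finset

theorem choose_add_sum_Icc_two_choose (a b : ℕ) {m : ℕ} (hm : 1 ≤ m) :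
    (a + 2).choose (b + 1) + ∑ j ∈ Icc 2 m, (j + a).choose (j + b) =
      (m + a + 1).choose (m + b) := by
  induction m, hm using Nat.le_induction with
  | base => rw [Icc_eq_empty (by omega), sum_empty, add_zero, add_comm 1 b]; ring_nf
  | succ m hm ih =>
    rw [sum_Icc_succ_top (by omega), ← add_assoc, ih, show m + 1 + a + 1 = (m + a + 1) + 1 by ring,
      show m + 1 + b = (m + b) + 1 by ring, Nat.choose_succ_succ' (m + a + 1)]
    ring_nf

theorem choose_two_add_mul_sub {n P : ℕ} (hP : P ≤ n) :
    (n - P + 1).choose 2 + (n * P - P * (P - 1) / 2) = (n + 1).choose 2 := by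
  rw [← Nat.choose_two_right]
  have hle : P.choose 2 ≤ n * P :=
    calc P.choose 2 ≤ P * (P - 1) := Nat.choose_two_right P ▸ Nat.div_le_self _ _
      _ ≤ n * P := by rw [mul_comm]; exact Nat.mul_le_mul_right P (by omega)
  qify [hle, hP]
  push_cast [Nat.cast_choose_two, Nat.cast_sub hP]
  ring

theorem sum_Icc_one_update (g : ℕ → ℕ) (F : ℕ → ℕ → ℕ) (q : ℕ) {m : ℕ} (hm : 1 ≤ m) :
    ∑ j ∈ Icc 1 m, F j (Function.update g 1 q j) = F 1 q + ∑ j ∈ Icc 2 m, F j (g j) := by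
  rw [← insert_Icc_add_one_left_eq_Icc hm, sum_insert (by simp), Function.update_self]
  congr 1
  exact sum_congr rfl fun j hj => by rw [Function.update_of_ne (by have := (mem_Icc.1 hj).1; omega)]

namespace MacaulayRep

variable {m c J : ℕ} {k : ℕ → ℕ}

theorem le_apply (h : MacaulayRep m c J k) {j : ℕ} (hJj : J ≤ j) (hjm : j ≤ m) : j ≤ k j := by
  induction j, hJj using Nat.le_induction with
  | base => exact h.2.2.2.1
  | succ i hJi ih =>
    have := h.2.2.1 ⟨hJi, by omega⟩ ⟨by omega, hjm⟩ (Nat.lt_succ_self i)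
    have := ih (by omega)
    omega

theorem choose_top_le (h : MacaulayRep m c J k) : (k m).choose m ≤ c := by
  rw [h.2.2.2.2]
  exact single_le_sum (f := fun j => (k j).choose j) (fun _ _ => Nat.zero_le _)
    (mem_Icc.2 ⟨h.2.1, le_rfl⟩)

theorem pos (h : MacaulayRep m c J k) : 0 < c :=
  (Nat.choose_pos (h.le_apply h.2.1 le_rfl)).trans_le h.choose_top_le

theorem tail {t : ℕ} (h : MacaulayRep (t + 1) c J k) (hJt : J ≤ t) :
    MacaulayRep t (c - (k (t + 1)).choose (t + 1)) J k := by
  obtain ⟨hJ, -, hmono, hJk, hc⟩ := h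
  refine ⟨hJ, hJt, hmono.mono (Set.Icc_subset_Icc_right (by omega)), hJk, ?_⟩
  rw [hc, sum_Icc_succ_top (by omega), Nat.add_sub_cancel]

theorem eq_top_iff {t : ℕ} (h : MacaulayRep (t + 1) c J k) :
    J = t + 1 ↔ c = (k (t + 1)).choose (t + 1) := by
  refine ⟨fun hJ => ?_, fun hc => by_contra fun hJ => ?_⟩
  · rw [h.2.2.2.2, hJ, Icc_self, sum_singleton]
  · have := (h.tail (by have := h.2.1; omega)).pos
    omega

theorem lt_choose_succ (h : MacaulayRep m c J k) : c < (k m + 1).choose m := by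
  induction m generalizing c with
  | zero => exact absurd h.2.1 (by have := h.1; omega)
  | succ t ih =>
    rw [Nat.choose_succ_succ']
    suffices c - (k (t + 1)).choose (t + 1) < (k (t + 1)).choose t by
      have := h.choose_top_le; omega
    by_cases hJt : J = t + 1
    · rw [h.eq_top_iff.1 hJt, Nat.sub_self]
      exact Nat.choose_pos (by have := h.le_apply h.2.1 le_rfl; omega)
    · have hJt : J ≤ t := by have := h.2.1; omega
      have hlt : k t < k (t + 1) := h.2.2.1 ⟨hJt, by omega⟩ ⟨by omega, le_rfl⟩ (by omega)
      exact (ih (h.tail hJt)).trans_le (Nat.choose_le_choose t hlt)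

theorem top_le {J' : ℕ} {k' : ℕ → ℕ} (h : MacaulayRep m c J k) (h' : MacaulayRep m c J' k') :
    k m ≤ k' m :=
  not_lt.1 fun hlt =>
    (h'.lt_choose_succ.trans_le (Nat.choose_le_choose m hlt)).not_ge h.choose_top_le

theorem top_eq {J' : ℕ} {k' : ℕ → ℕ} (h : MacaulayRep m c J k) (h' : MacaulayRep m c J' k') :
    k m = k' m :=
  (h.top_le h').antisymm (h'.top_le h)

theorem sum_choose_succ_eq {J' : ℕ} {k' : ℕ → ℕ} (h : MacaulayRep m c J k)
    (h' : MacaulayRep m c J' k') :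
    ∑ j ∈ Icc J m, (k j + 1).choose (j + 1) = ∑ j ∈ Icc J' m, (k' j + 1).choose (j + 1) := by
  induction m generalizing c with
  | zero => exact absurd h.2.1 (by have := h.1; omega)
  | succ t ih =>
    have htop := h.top_eq h'
    have hJJ' : J = t + 1 ↔ J' = t + 1 := by rw [h.eq_top_iff, h'.eq_top_iff, htop]
    by_cases hJt : J = t + 1
    · rw [hJt, hJJ'.1 hJt, Icc_self, sum_singleton, sum_singleton, htop]
    · have hJt' : J ≤ t := by have := h.2.1; omega
      have hJ't' : J' ≤ t := by have := h'.2.1; omega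
      rw [sum_Icc_succ_top (by omega), sum_Icc_succ_top (by omega),
        ih (h.tail hJt') (htop ▸ h'.tail hJ't'), htop]

theorem single {a : ℕ} (hm : 0 < m) (hma : m ≤ a) : MacaulayRep m (a.choose m) m fun _ => a :=
  ⟨hm, le_rfl, (Set.Icc_self m).symm ▸ Set.strictMonoOn_singleton _, hma, by simp⟩

theorem diagonal {a q : ℕ} (hm : 1 ≤ m) (hq : 0 < q) (hqa : q < a + 2) :
    MacaulayRep m ((m + a + 1).choose m - (a + 2 - q)) 1 (Function.update (· + a) 1 q) := by
  refine ⟨one_pos, hm, fun x hx y hy hxy => ?_, by rwa [Function.update_self], ?_⟩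
  · simp only [Set.mem_Icc] at hx hy
    simp only [Function.update_apply]
    split_ifs <;> omega
  · rw [sum_Icc_one_update _ (fun j i => i.choose j) q hm, Nat.choose_one_right]
    have := choose_add_sum_Icc_two_choose a 0 hm
    rw [zero_add, Nat.choose_one_right] at this
    simp only [add_zero] at this
    omega

theorem diagonal_sum_choose_succ {a q : ℕ} (hm : 1 ≤ m) :
    ∑ j ∈ Icc 1 m, (Function.update (· + a) 1 q j + 1).choose (j + 1) + (a + 2 + 1).choose 2 =
      (m + a + 2).choose (m + 1) + (q + 1).choose 2 := by
  rw [sum_Icc_one_update _ (fun j i => (i + 1).choose (j + 1)) q hm]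
  have := choose_add_sum_Icc_two_choose (a + 1) 1 hm
  rw [show a + 1 + 2 = a + 2 + 1 by ring, show m + (a + 1) + 1 = m + a + 2 by ring] at this
  simp only [← add_assoc, Nat.reduceAdd] at this ⊢
  omega

end MacaulayRep

theorem MacaulayStep.eq_sum_of_rep {s x y J : ℕ} {k : ℕ → ℕ} (hs : MacaulayStep s x y)
    (h : MacaulayRep s x J k) : y = ∑ j ∈ Icc J s, (k j + 1).choose (j + 1) := by
  obtain ⟨J', k', h', rfl⟩ := hs
  exact h'.sum_choose_succ_eq h

/-- For `P < n` and `m ≥ 1`, the Macaulay operator satisfies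
`(D_m − P)^{<m>} = D_{m+1} − (nP − P(P−1)/2)`, where `D_k = C(k+n-1, k)`. -/
theorem macaulay_op_Dm_sub_P (n m P y : ℕ) (hP : P < n) (hm : 1 ≤ m)
    (hstep : MacaulayStep m ((m + n - 1).choose m - P) y) :
    y = (m + 1 + n - 1).choose (m + 1) - (n * P - P * (P - 1) / 2) := by
  rcases Nat.eq_zero_or_pos P with rfl | hP0
  · rw [Nat.sub_zero] at hstep
    rw [hstep.eq_sum_of_rep (MacaulayRep.single hm (by omega)), Icc_self, sum_singleton,
      show m + 1 + n - 1 = m + n - 1 + 1 by omega]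
    simp
  · obtain ⟨a, rfl⟩ : ∃ a, n = a + 2 := ⟨n - 2, by omega⟩
    have hrep := MacaulayRep.diagonal (a := a) (q := a + 2 - P) hm (by omega) (by omega)
    rw [show a + 2 - (a + 2 - P) = P by omega, show m + a + 1 = m + (a + 2) - 1 by omega] at hrep
    have hy := MacaulayRep.diagonal_sum_choose_succ (a := a) (q := a + 2 - P) hm
    rw [← hstep.eq_sum_of_rep hrep] at hy
    have htri := choose_two_add_mul_sub hP.le
    rw [show m + 1 + (a + 2) - 1 = m + a + 2 by omega]
    omega
end
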